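/- arXiv:1811.11154 — 5 statements merged into one kernel-verified Lean document; each statement's English description precedes it below -/
import Mathlib

section
/- If Y is determined by Z, i.e., Y = f(Z) for a measurable function f, then Y is conditionally independent of 1{A=a} given Z, and hence the population weighted estimator of mean group outcome is unbiased: E[P(A=a|Z)Y]/E[P(A=a|Z)] = E[Y|A=a]. -/
open MeasureTheory

/-!
`Y = f ∘ Z` is σ(Z)-measurable, so it can be pulled out of every conditional expectation given
`Z`: `E[1_s Y | Z] = E[1_s | Z] Y = E[1_s | Z] E[Y | Z]`. Integrating this identity, and
`E[1_s | Z]` itself, turns the weighted estimator into `E[1_s Y] / P(s)`.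
-/

lemma Set.indicator_one_mul {ι M₀ : Type*} [MulZeroOneClass M₀] (s : Set ι) (g : ι → M₀) :
    s.indicator (fun _ => (1 : M₀)) * g = s.indicator g :=
  funext fun ω => by rw [Pi.mul_apply, ← Set.indicator_mul_left]; simp only [one_mul]

section PullOut

variable {Ω : Type*} {m m0 : MeasurableSpace Ω} {μ : Measure Ω} {f g : Ω → ℝ}

lemma condExp_mul_eq_mul_condExp_of_stronglyMeasurable_right (hm : m ≤ m0)
    [SigmaFinite (μ.trim hm)]
    (hg : StronglyMeasurable[m] g) (hfg : Integrable (f * g) μ) (hf : Integrable f μ)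
    (hg_int : Integrable g μ) :
    μ[f * g | m] =ᵐ[μ] μ[f | m] * μ[g | m] := by
  rw [condExp_of_stronglyMeasurable hm hg hg_int]
  exact condExp_mul_of_stronglyMeasurable_right hg hfg hf

lemma integral_condExp_mul_of_stronglyMeasurable_right (hm : m ≤ m0) [SigmaFinite (μ.trim hm)]
    (hg : StronglyMeasurable[m] g) (hfg : Integrable (f * g) μ) (hf : Integrable f μ) :
    ∫ ω, μ[f | m] ω * g ω ∂μ = ∫ ω, (f * g) ω ∂μ := by
  rw [← integral_condExp hm (f := f * g)]
  exact integral_congr_ae (condExp_mul_of_stronglyMeasurable_right hg hfg hf).symm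

end PullOut

/-- `s` plays the role of the event `{A = a}`, and σ(Z) is `MeasurableSpace.comap Z mγ`. -/
theorem weighted_estimator_unbiased_of_determined_general
    {Ω γ : Type*} {mΩ : MeasurableSpace Ω} {mγ : MeasurableSpace γ}
    (μ : Measure Ω) [IsProbabilityMeasure μ]
    (Z : Ω → γ) (hZ : Measurable Z)
    (f : γ → ℝ) (hf : Measurable f) (C : ℝ) (hfbdd : ∀ x, |f x| ≤ C)
    (Y : Ω → ℝ) (hY : Y = fun ω => f (Z ω))
    (s : Set Ω) (hs : MeasurableSet s) :
    ((μ[fun ω => s.indicator (fun _ => (1:ℝ)) ω * Y ω | MeasurableSpace.comap Z mγ])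
        =ᵐ[μ] fun ω =>
          (μ[s.indicator (fun _ => (1:ℝ)) | MeasurableSpace.comap Z mγ]) ω
            * (μ[Y | MeasurableSpace.comap Z mγ]) ω)
    ∧ (∫ ω, (μ[s.indicator (fun _ => (1:ℝ)) | MeasurableSpace.comap Z mγ]) ω * Y ω ∂μ) /
          (∫ ω, (μ[s.indicator (fun _ => (1:ℝ)) | MeasurableSpace.comap Z mγ]) ω ∂μ)
        = (∫ ω in s, Y ω ∂μ) / (μ s).toReal := by
  have hm : MeasurableSpace.comap Z mγ ≤ mΩ := hZ.comap_le
  have hY_meas : StronglyMeasurable[MeasurableSpace.comap Z mγ] Y :=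
    hY ▸ (hf.comp (comap_measurable Z)).stronglyMeasurable
  have hY_int : Integrable Y μ :=
    .of_bound (hY_meas.mono hm).aestronglyMeasurable C
      (.of_forall fun ω => by simpa [hY] using hfbdd (Z ω))
  have hs_int : Integrable (s.indicator fun _ => (1 : ℝ)) μ := (integrable_const 1).indicator hs
  have hsY_int : Integrable (s.indicator (fun _ => (1 : ℝ)) * Y) μ := by
    rw [Set.indicator_one_mul]
    exact hY_int.indicator hs
  refine ⟨condExp_mul_eq_mul_condExp_of_stronglyMeasurable_right hm hY_meas hsY_int hs_int
    hY_int, ?_⟩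
  rw [integral_condExp_mul_of_stronglyMeasurable_right hm hY_meas hsY_int hs_int,
    integral_condExp hm, integral_indicator_const _ hs, Set.indicator_one_mul, integral_indicator hs,
    smul_eq_mul, mul_one, measureReal_def]

/-- If `Y = f(Z)` for a bounded measurable `f`, then `Y` is
conditionally independent of `1{A=a}` given `Z` (in the sense
`E[1{A=a}·Y | Z] = E[1{A=a}|Z]·E[Y|Z]` a.s., where σ(Z) is the comap σ-algebra of `Z`),
and hence the population weighted estimator of the mean group outcome is unbiased:
`E[P(A=a|Z)·Y]/E[P(A=a|Z)] = E[Y | A=a]`. Here `s = {A=a}`. -/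
theorem weighted_estimator_unbiased_of_determined
    {Ω γ : Type*} {mΩ : MeasurableSpace Ω} {mγ : MeasurableSpace γ}
    (μ : Measure Ω) [IsProbabilityMeasure μ]
    (Z : Ω → γ) (hZ : Measurable Z)
    (f : γ → ℝ) (hf : Measurable f) (C : ℝ) (hfbdd : ∀ x, |f x| ≤ C)
    (Y : Ω → ℝ) (hY : Y = fun ω => f (Z ω))
    (s : Set Ω) (hs : MeasurableSet s) (hpa : 0 < (μ s).toReal) :
    ((μ[fun ω => s.indicator (fun _ => (1:ℝ)) ω * Y ω | MeasurableSpace.comap Z mγ])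
        =ᵐ[μ] fun ω =>
          (μ[s.indicator (fun _ => (1:ℝ)) | MeasurableSpace.comap Z mγ]) ω
            * (μ[Y | MeasurableSpace.comap Z mγ]) ω)
    ∧ (∫ ω, (μ[s.indicator (fun _ => (1:ℝ)) | MeasurableSpace.comap Z mγ]) ω * Y ω ∂μ) /
          (∫ ω, (μ[s.indicator (fun _ => (1:ℝ)) | MeasurableSpace.comap Z mγ]) ω ∂μ)
        = (∫ ω in s, Y ω ∂μ) / (μ s).toReal :=
  weighted_estimator_unbiased_of_determined_general (mΩ := mΩ) μ Z hZ f hf C hfbdd Y hY s hs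
end

section
/- The population bias of the thresholded estimator for mean group outcome satisfies: E[Y | Â=a] − E[Y | A=a] = Δ₁(a)·C₁(a) − Δ₂(a)·C₂(a) + (Δ₁(a) − Δ₂(a))·C₃(a), where Δ₁(a) = E[Y | P(A=a|Z)>q, A=b] − E[Y | P(A=a|Z)>q, A=a], Δ₂(a) = E[Y | P(A=a|Z)≤q, A=a] − E[Y | P(A=a|Z)>q, A=a], C₁(a) = P(Â=a | A=a)·P(A=b | Â=a), C₂(a) = P(A=a | Â=a)·P(Â≠a | A=a), and C₃(a) = P(Â≠a | A=a)·P(A=b | Â=a). -/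
open MeasureTheory

/-- **Theorem 3.2 of the paper.** Bias decomposition of the thresholded
estimator.  Here `m = σ(Z)`, `s = {A=a}`, `sᶜ = {A=b}`, `g = P(A=a|Z) = μ[1ₛ|m]`,
threshold `q ∈ [1/2,1)` and `{Â=a} = {g > q}`, `{Â≠a} = {g ≤ q}` among the events used.
Then `E[Y|Â=a] − E[Y|A=a] = Δ₁·C₁ − Δ₂·C₂ + (Δ₁−Δ₂)·C₃`. -/
theorem thresholded_estimator_bias
    {Ω : Type*} (m : MeasurableSpace Ω) {mΩ : MeasurableSpace Ω} (μ : Measure Ω) [IsProbabilityMeasure μ]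
    (hm : m ≤ mΩ)
    (Y : Ω → ℝ) (hYmeas : Measurable Y) (C : ℝ) (hYbdd : ∀ ω, |Y ω| ≤ C)
    (s : Set Ω) (hs : MeasurableSet s)
    (q : ℝ) (hq : 1/2 ≤ q ∧ q < 1)
    (g : Ω → ℝ) (hg : g = μ[s.indicator (fun _ => (1:ℝ)) | m])
    -- all conditioning events have positive probability
    (hpaa : 0 < (μ ({ω | q < g ω} ∩ s)).toReal)
    (hpab : 0 < (μ ({ω | q < g ω} ∩ sᶜ)).toReal)
    (hpma : 0 < (μ ({ω | g ω ≤ q} ∩ s)).toReal)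
    (hpA : 0 < (μ s).toReal) (hpAh : 0 < (μ {ω | q < g ω}).toReal)
    (Δ₁ Δ₂ C₁ C₂ C₃ : ℝ)
    (hΔ₁ : Δ₁ = (∫ ω in {ω | q < g ω} ∩ sᶜ, Y ω ∂μ) / (μ ({ω | q < g ω} ∩ sᶜ)).toReal
              - (∫ ω in {ω | q < g ω} ∩ s, Y ω ∂μ) / (μ ({ω | q < g ω} ∩ s)).toReal)
    (hΔ₂ : Δ₂ = (∫ ω in {ω | g ω ≤ q} ∩ s, Y ω ∂μ) / (μ ({ω | g ω ≤ q} ∩ s)).toReal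
              - (∫ ω in {ω | q < g ω} ∩ s, Y ω ∂μ) / (μ ({ω | q < g ω} ∩ s)).toReal)
    (hC₁ : C₁ = (μ ({ω | q < g ω} ∩ s)).toReal / (μ s).toReal
              * ((μ ({ω | q < g ω} ∩ sᶜ)).toReal / (μ {ω | q < g ω}).toReal))
    (hC₂ : C₂ = (μ ({ω | q < g ω} ∩ s)).toReal / (μ {ω | q < g ω}).toReal
              * ((μ ({ω | g ω ≤ q} ∩ s)).toReal / (μ s).toReal))
    (hC₃ : C₃ = (μ ({ω | g ω ≤ q} ∩ s)).toReal / (μ s).toReal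
              * ((μ ({ω | q < g ω} ∩ sᶜ)).toReal / (μ {ω | q < g ω}).toReal)) :
    (∫ ω in {ω | q < g ω}, Y ω ∂μ) / (μ {ω | q < g ω}).toReal
        - (∫ ω in s, Y ω ∂μ) / (μ s).toReal
      = Δ₁ * C₁ - Δ₂ * C₂ + (Δ₁ - Δ₂) * C₃ := by
  have hgmeas : Measurable[m] g := by
    rw [hg]; exact stronglyMeasurable_condExp.measurable
  have hT : MeasurableSet[mΩ] {ω | q < g ω} :=
    hm _ (hgmeas measurableSet_Ioi)
  set T : Set Ω := {ω | q < g ω} with hTdef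
  have hTc : {ω | g ω ≤ q} = Tᶜ := by ext ω; simp [hTdef, not_lt]
  have hY' : Measurable[mΩ] Y := hYmeas
  have hs' : MeasurableSet[mΩ] s := hs
  have hYint : Integrable Y μ :=
    Integrable.mono' (integrable_const C) (hY'.aestronglyMeasurable (μ := μ)) (ae_of_all _ hYbdd)
  have hint : ∀ u : Set Ω, Integrable Y (μ.restrict u) := fun u => hYint.restrict
  -- splitting of T
  have hsplitT : T = (T ∩ s) ∪ (T ∩ sᶜ) := (Set.inter_union_compl T s).symm
  have hsplits : s = (T ∩ s) ∪ (Tᶜ ∩ s) := by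
    rw [← Set.union_inter_distrib_right, Set.union_compl_self, Set.univ_inter]
  have hdisj1 : Disjoint (T ∩ s) (T ∩ sᶜ) :=
    Set.disjoint_of_subset Set.inter_subset_right Set.inter_subset_right
      disjoint_compl_right
  have hdisj2 : Disjoint (T ∩ s) (Tᶜ ∩ s) :=
    Set.disjoint_of_subset Set.inter_subset_left Set.inter_subset_left
      disjoint_compl_right
  have hm2 : MeasurableSet[mΩ] (T ∩ sᶜ) := hT.inter hs'.compl
  have hm3 : MeasurableSet[mΩ] (Tᶜ ∩ s) := hT.compl.inter hs'
  have hIT : (∫ ω in T, Y ω ∂μ) = (∫ ω in T ∩ s, Y ω ∂μ) + (∫ ω in T ∩ sᶜ, Y ω ∂μ) := by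
    conv_lhs => rw [hsplitT]
    exact @setIntegral_union Ω ℝ mΩ _ _ Y _ _ μ hdisj1 hm2 (hint _) (hint _)
  have hIs : (∫ ω in s, Y ω ∂μ) = (∫ ω in T ∩ s, Y ω ∂μ) + (∫ ω in Tᶜ ∩ s, Y ω ∂μ) := by
    conv_lhs => rw [hsplits]
    exact @setIntegral_union Ω ℝ mΩ _ _ Y _ _ μ hdisj2 hm3 (hint _) (hint _)
  have hμT : (μ T).toReal = (μ (T ∩ s)).toReal + (μ (T ∩ sᶜ)).toReal := by
    conv_lhs => rw [hsplitT]
    rw [@measure_union Ω mΩ μ _ _ hdisj1 hm2,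
      ENNReal.toReal_add (measure_ne_top μ _) (measure_ne_top μ _)]
  have hμs : (μ s).toReal = (μ (T ∩ s)).toReal + (μ (Tᶜ ∩ s)).toReal := by
    conv_lhs => rw [hsplits]
    rw [@measure_union Ω mΩ μ _ _ hdisj2 hm3,
      ENNReal.toReal_add (measure_ne_top μ _) (measure_ne_top μ _)]
  rw [hTc] at hΔ₂ hC₂ hC₃ hpma
  set p1 := (μ (T ∩ s)).toReal
  set p2 := (μ (T ∩ sᶜ)).toReal
  set p3 := (μ (Tᶜ ∩ s)).toReal
  rw [hΔ₁, hΔ₂, hC₁, hC₂, hC₃, hIT, hIs, hμT, hμs]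
  rw [hμT] at hpAh; rw [hμs] at hpA
  field_simp
  ring
end

section
/- For a binary protected class A ∈ {a,b} and thresholded classifier Â ∈ {a,b,NA} with P(A=u)>0 and P(Â=u)>0: C₂(u) − C₁(u) = [P(A=u, Â=u) / (P(Â=u)·P(A=u))] · (P(A=u) − P(Â=u)), where C₁(u) = P(Â=u|A=u)·P(A=u^c|Â=u) and C₂(u) = P(A=u|Â=u)·P(Â≠u|A=u). Consequently, if additionally P(A=u, Â=u) > 0, then C₂(u) > C₁(u) if and only if P(A=u) > P(Â=u). -/
open MeasureTheory

/-- **Corollary 3.4(ii).** For binary `A` (`s = {A=u}`, `sᶜ = {A=u^c}`)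
and classifier event `t = {Â=u}`:
`C₂(u) − C₁(u) = [P(A=u, Â=u)/(P(Â=u)·P(A=u))]·(P(A=u) − P(Â=u))`; consequently if
`P(A=u, Â=u) > 0` then `C₂(u) > C₁(u) ↔ P(A=u) > P(Â=u)`. -/
theorem C2_vs_C1
    {Ω : Type*} {mΩ : MeasurableSpace Ω} (μ : Measure Ω) [IsProbabilityMeasure μ]
    (s t : Set Ω) (hs : MeasurableSet s) (ht : MeasurableSet t)
    (hps : 0 < (μ s).toReal) (hpt : 0 < (μ t).toReal)
    (C₁ C₂ : ℝ)
    (hC₁ : C₁ = (μ (t ∩ s)).toReal / (μ s).toReal * ((μ (t ∩ sᶜ)).toReal / (μ t).toReal))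
    (hC₂ : C₂ = (μ (t ∩ s)).toReal / (μ t).toReal * ((μ (tᶜ ∩ s)).toReal / (μ s).toReal)) :
    C₂ - C₁ = (μ (s ∩ t)).toReal / ((μ t).toReal * (μ s).toReal)
        * ((μ s).toReal - (μ t).toReal)
    ∧ (0 < (μ (s ∩ t)).toReal → (C₂ > C₁ ↔ (μ s).toReal > (μ t).toReal)) := by
  have hst : s ∩ t = t ∩ s := Set.inter_comm s t
  have h1 : (μ (t ∩ s)).toReal + (μ (t ∩ sᶜ)).toReal = (μ t).toReal := by
    rw [← ENNReal.toReal_add (measure_ne_top _ _) (measure_ne_top _ _)]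
    congr 1
    rw [← Set.diff_eq]
    exact measure_inter_add_diff t hs
  have h2 : (μ (t ∩ s)).toReal + (μ (tᶜ ∩ s)).toReal = (μ s).toReal := by
    rw [← ENNReal.toReal_add (measure_ne_top _ _) (measure_ne_top _ _)]
    rw [Set.inter_comm t s, Set.inter_comm tᶜ s, ← Set.diff_eq]
    congr 1
    exact measure_inter_add_diff s ht
  have key : C₂ - C₁ = (μ (s ∩ t)).toReal / ((μ t).toReal * (μ s).toReal)
      * ((μ s).toReal - (μ t).toReal) := by
    rw [hC₁, hC₂, hst]
    have e1 : (μ (t ∩ sᶜ)).toReal = (μ t).toReal - (μ (t ∩ s)).toReal := by linarith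
    have e2 : (μ (tᶜ ∩ s)).toReal = (μ s).toReal - (μ (t ∩ s)).toReal := by linarith
    rw [e1, e2]
    field_simp
    ring
  refine ⟨key, fun hq => ?_⟩
  have : C₂ - C₁ > 0 ↔ (μ s).toReal - (μ t).toReal > 0 := by
    rw [key]
    constructor
    · intro h
      nlinarith [div_pos hq (mul_pos hpt hps)]
    · intro h
      exact mul_pos (div_pos hq (mul_pos hpt hps)) h
  constructor
  · intro h
    have := this.mp (by linarith)
    linarith
  · intro h
    have := this.mpr (by linarith)
    linarith
end

section
/- The bias of the population weighted demographic-disparity estimator equals −E[Cov(1{A=a},Y|Z)]/P(A=a) + E[Cov(1{A=b},Y|Z)]/P(A=b); in the binary case A ∈ {a,b}, Cov(1{A=b},Y|Z) = −Cov(1{A=a},Y|Z), so the bias simplifies to −E[Cov(1{A=a},Y|Z)]·(1/P(A=a) + 1/P(A=b)). -/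
open MeasureTheory

/-- The bias of the population weighted demographic-disparity
estimator is `δ_W − δ = −E[Cov(1{A=a},Y|Z)]/P(A=a) + E[Cov(1{A=b},Y|Z)]/P(A=b)`;
since `A` is binary (`s = {A=a}`, `sᶜ = {A=b}`), the conditional covariances satisfy
`Cov(1{A=b},Y|Z) = −Cov(1{A=a},Y|Z)` a.e., so the bias simplifies to
`−E[Cov(1{A=a},Y|Z)]·(1/P(A=a) + 1/P(A=b))`.  Here `m = σ(Z)` and
`Cov(1{A=u},Y|Z) = E[1{A=u}Y|Z] − E[1{A=u}|Z]·E[Y|Z]`. -/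
theorem weighted_disparity_bias
    {Ω : Type*} (m : MeasurableSpace Ω) {mΩ : MeasurableSpace Ω} (μ : Measure Ω) [IsProbabilityMeasure μ]
    (hm : m ≤ mΩ)
    (Y : Ω → ℝ) (hYmeas : Measurable Y) (C : ℝ) (hYbdd : ∀ ω, |Y ω| ≤ C)
    (s : Set Ω) (hs : MeasurableSet s)
    (hpa : 0 < (μ s).toReal) (hpb : 0 < (μ sᶜ).toReal)
    (cova covb : Ω → ℝ)
    (hcova : cova =ᵐ[μ] fun ω => (μ[fun ω' => s.indicator (fun _ => (1:ℝ)) ω' * Y ω' | m]) ω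
        - (μ[s.indicator (fun _ => (1:ℝ)) | m]) ω * (μ[Y | m]) ω)
    (hcovb : covb =ᵐ[μ] fun ω => (μ[fun ω' => sᶜ.indicator (fun _ => (1:ℝ)) ω' * Y ω' | m]) ω
        - (μ[sᶜ.indicator (fun _ => (1:ℝ)) | m]) ω * (μ[Y | m]) ω) :
    ((∫ ω, (μ[s.indicator (fun _ => (1:ℝ)) | m]) ω * Y ω ∂μ) / (μ s).toReal
        - (∫ ω, (μ[sᶜ.indicator (fun _ => (1:ℝ)) | m]) ω * Y ω ∂μ) / (μ sᶜ).toReal)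
        - ((∫ ω in s, Y ω ∂μ) / (μ s).toReal - (∫ ω in sᶜ, Y ω ∂μ) / (μ sᶜ).toReal)
      = -(∫ ω, cova ω ∂μ) / (μ s).toReal + (∫ ω, covb ω ∂μ) / (μ sᶜ).toReal
    ∧ covb =ᵐ[μ] (fun ω => -cova ω)
    ∧ ((∫ ω, (μ[s.indicator (fun _ => (1:ℝ)) | m]) ω * Y ω ∂μ) / (μ s).toReal
        - (∫ ω, (μ[sᶜ.indicator (fun _ => (1:ℝ)) | m]) ω * Y ω ∂μ) / (μ sᶜ).toReal)
        - ((∫ ω in s, Y ω ∂μ) / (μ s).toReal - (∫ ω in sᶜ, Y ω ∂μ) / (μ sᶜ).toReal)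
      = -(∫ ω, cova ω ∂μ) * (1 / (μ s).toReal + 1 / (μ sᶜ).toReal) := by
  letI : MeasurableSpace Ω := mΩ
  haveI : IsFiniteMeasure (μ.trim hm) := isFiniteMeasure_trim hm
  haveI : SigmaFinite (μ.trim hm) := inferInstance
  -- integrability of Y
  have hs' : MeasurableSet[mΩ] s := hs
  have hYae : AEStronglyMeasurable Y μ := hYmeas.aestronglyMeasurable
  have hYint : Integrable Y μ := by
    refine ⟨hYae, HasFiniteIntegral.of_bounded (C := C) ?_⟩
    exact Filter.Eventually.of_forall fun ω => by simpa [Real.norm_eq_abs] using hYbdd ω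
  -- indicator functions and their products with Y
  have hIa : Integrable (s.indicator (fun _ => (1:ℝ))) μ :=
    (integrable_const (1:ℝ)).indicator hs'
  have hIb : Integrable (sᶜ.indicator (fun _ => (1:ℝ))) μ :=
    (integrable_const (1:ℝ)).indicator hs'.compl
  have heqa : (fun ω => s.indicator (fun _ => (1:ℝ)) ω * Y ω) = s.indicator Y := by
    funext ω; by_cases h : ω ∈ s <;> simp [Set.indicator_of_mem, Set.indicator_of_notMem, h]
  have heqb : (fun ω => sᶜ.indicator (fun _ => (1:ℝ)) ω * Y ω) = sᶜ.indicator Y := by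
    funext ω; by_cases h : ω ∈ sᶜ <;> simp [Set.indicator_of_mem, Set.indicator_of_notMem, h]
  have hIaY : Integrable (fun ω => s.indicator (fun _ => (1:ℝ)) ω * Y ω) μ := by
    rw [heqa]; exact hYint.indicator hs'
  have hIbY : Integrable (fun ω => sᶜ.indicator (fun _ => (1:ℝ)) ω * Y ω) μ := by
    rw [heqb]; exact hYint.indicator hs'.compl
  set ga := μ[s.indicator (fun _ => (1:ℝ)) | m] with hga
  set gb := μ[sᶜ.indicator (fun _ => (1:ℝ)) | m] with hgb
  -- boundedness of condexps of indicators
  have hbdda : ∀ᵐ ω ∂μ, |ga ω| ≤ ((1:NNReal):ℝ) := by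
    refine ae_bdd_condExp_of_ae_bdd (Filter.Eventually.of_forall fun ω => ?_)
    by_cases h : ω ∈ s <;> simp [Set.indicator_of_mem, Set.indicator_of_notMem, h]
  have hbddb : ∀ᵐ ω ∂μ, |gb ω| ≤ ((1:NNReal):ℝ) := by
    refine ae_bdd_condExp_of_ae_bdd (Filter.Eventually.of_forall fun ω => ?_)
    by_cases h : ω ∈ sᶜ <;> simp [Set.indicator_of_mem, Set.indicator_of_notMem, h]
  have hgam : StronglyMeasurable[m] ga := by rw [hga]; exact stronglyMeasurable_condExp
  have hgbm : StronglyMeasurable[m] gb := by rw [hgb]; exact stronglyMeasurable_condExp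
  have hgaae : AEStronglyMeasurable ga μ := (hgam.mono hm).aestronglyMeasurable
  have hgbae : AEStronglyMeasurable gb μ := (hgbm.mono hm).aestronglyMeasurable
  have hgaY : Integrable (fun ω => ga ω * Y ω) μ :=
    hYint.bdd_mul (c := 1) hgaae
      (hbdda.mono fun ω h => by simpa [Real.norm_eq_abs] using h)
  have hgbY : Integrable (fun ω => gb ω * Y ω) μ :=
    hYint.bdd_mul (c := 1) hgbae
      (hbddb.mono fun ω h => by simpa [Real.norm_eq_abs] using h)
  -- pull-out
  have hpulla : μ[(fun ω => ga ω * Y ω)|m] =ᵐ[μ] fun ω => ga ω * (μ[Y|m]) ω :=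
    condExp_mul_of_stronglyMeasurable_left hgam hgaY hYint
  have hpullb : μ[(fun ω => gb ω * Y ω)|m] =ᵐ[μ] fun ω => gb ω * (μ[Y|m]) ω :=
    condExp_mul_of_stronglyMeasurable_left hgbm hgbY hYint
  have hga_prod_int : Integrable (fun ω => ga ω * (μ[Y|m]) ω) μ :=
    integrable_condExp.congr hpulla
  have hgb_prod_int : Integrable (fun ω => gb ω * (μ[Y|m]) ω) μ :=
    integrable_condExp.congr hpullb
  -- key integral identities
  have hA : ∫ ω, ga ω * Y ω ∂μ = ∫ ω, ga ω * (μ[Y|m]) ω ∂μ := by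
    rw [← integral_condExp hm (f := fun ω => ga ω * Y ω)]
    exact integral_congr_ae hpulla
  have hB : ∫ ω, gb ω * Y ω ∂μ = ∫ ω, gb ω * (μ[Y|m]) ω ∂μ := by
    rw [← integral_condExp hm (f := fun ω => gb ω * Y ω)]
    exact integral_congr_ae hpullb
  have hCa : ∫ ω, (μ[fun ω' => s.indicator (fun _ => (1:ℝ)) ω' * Y ω' | m]) ω ∂μ
      = ∫ ω in s, Y ω ∂μ := by
    rw [integral_condExp hm, heqa, integral_indicator hs']
  have hCb : ∫ ω, (μ[fun ω' => sᶜ.indicator (fun _ => (1:ℝ)) ω' * Y ω' | m]) ω ∂μ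
      = ∫ ω in sᶜ, Y ω ∂μ := by
    rw [integral_condExp hm, heqb, integral_indicator hs'.compl]
  have hcova_int : ∫ ω, cova ω ∂μ = (∫ ω in s, Y ω ∂μ) - ∫ ω, ga ω * Y ω ∂μ := by
    rw [integral_congr_ae hcova, integral_sub integrable_condExp hga_prod_int, hCa, hA]
  have hcovb_int : ∫ ω, covb ω ∂μ = (∫ ω in sᶜ, Y ω ∂μ) - ∫ ω, gb ω * Y ω ∂μ := by
    rw [integral_congr_ae hcovb, integral_sub integrable_condExp hgb_prod_int, hCb, hB]
  -- covb = -cova a.e.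
  have hsub1 : (fun ω => sᶜ.indicator (fun _ => (1:ℝ)) ω * Y ω)
      = fun ω => Y ω - s.indicator (fun _ => (1:ℝ)) ω * Y ω := by
    funext ω; by_cases h : ω ∈ s <;> simp [Set.indicator_of_mem, Set.indicator_of_notMem, h]
  have hsub2 : sᶜ.indicator (fun _ => (1:ℝ))
      = fun ω => (1:ℝ) - s.indicator (fun _ => (1:ℝ)) ω := by
    funext ω; by_cases h : ω ∈ s <;> simp [Set.indicator_of_mem, Set.indicator_of_notMem, h]
  have he1 : μ[fun ω' => sᶜ.indicator (fun _ => (1:ℝ)) ω' * Y ω' | m]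
      =ᵐ[μ] fun ω => (μ[Y|m]) ω - (μ[fun ω' => s.indicator (fun _ => (1:ℝ)) ω' * Y ω' | m]) ω := by
    rw [hsub1]
    exact condExp_sub hYint hIaY m
  have he2 : gb =ᵐ[μ] fun ω => 1 - ga ω := by
    rw [hgb, hsub2]
    refine (condExp_sub (integrable_const (1:ℝ)) hIa m).trans (Filter.EventuallyEq.of_eq ?_)
    funext ω
    simp [condExp_const hm, hga]
  have hcovb_neg : covb =ᵐ[μ] fun ω => -cova ω := by
    filter_upwards [hcova, hcovb, he1, he2] with ω h1 h2 h3 h4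
    rw [h2, h3, h1]
    simp only [h4]
    ring
  refine ⟨?_, hcovb_neg, ?_⟩
  · rw [hcova_int, hcovb_int]; ring
  · have heq : (∫ ω in sᶜ, Y ω ∂μ) - (∫ ω, gb ω * Y ω ∂μ)
        = -((∫ ω in s, Y ω ∂μ) - ∫ ω, ga ω * Y ω ∂μ) := by
      rw [← hcovb_int, ← hcova_int, integral_congr_ae hcovb_neg, integral_neg]
    rw [hcova_int]
    linear_combination heq * (1 / (μ sᶜ).toReal)
end

section
/- If Cov(1{A=a}, Y | Z) ≤ 0 almost surely and is strictly negative on a set of positive probability (with A binary, so Cov(1{A=b},Y|Z) = −Cov(1{A=a},Y|Z) ≥ 0), then the population weighted estimator strictly overestimates demographic disparity: E[P(A=a|Z)Y]/P(A=a) − E[P(A=b|Z)Y]/P(A=b) > E[Y|A=a] − E[Y|A=b]. -/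
open MeasureTheory

/-- If `Cov(1{A=a},Y|Z) ≤ 0` a.s. and is strictly negative on a set
of positive probability (with `A` binary, `s = {A=a}`, `sᶜ = {A=b}`), then the
population weighted estimator strictly overestimates demographic disparity:
`E[P(A=a|Z)Y]/P(A=a) − E[P(A=b|Z)Y]/P(A=b) > E[Y|A=a] − E[Y|A=b]`. -/
theorem weighted_strictly_overestimates
    {Ω : Type*} (m : MeasurableSpace Ω) {mΩ : MeasurableSpace Ω} (μ : Measure Ω) [IsProbabilityMeasure μ]
    (hm : m ≤ mΩ)
    (Y : Ω → ℝ) (hYmeas : Measurable Y) (C : ℝ) (hYbdd : ∀ ω, |Y ω| ≤ C)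
    (s : Set Ω) (hs : MeasurableSet s)
    (hpa : 0 < (μ s).toReal) (hpb : 0 < (μ sᶜ).toReal)
    (cova : Ω → ℝ)
    (hcova : cova =ᵐ[μ] fun ω => (μ[fun ω' => s.indicator (fun _ => (1:ℝ)) ω' * Y ω' | m]) ω
        - (μ[s.indicator (fun _ => (1:ℝ)) | m]) ω * (μ[Y | m]) ω)
    (hnonpos : ∀ᵐ ω ∂μ, cova ω ≤ 0)
    (hneg : 0 < μ {ω | cova ω < 0}) :
    (∫ ω, (μ[s.indicator (fun _ => (1:ℝ)) | m]) ω * Y ω ∂μ) / (μ s).toReal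
        - (∫ ω, (μ[sᶜ.indicator (fun _ => (1:ℝ)) | m]) ω * Y ω ∂μ) / (μ sᶜ).toReal
      > (∫ ω in s, Y ω ∂μ) / (μ s).toReal - (∫ ω in sᶜ, Y ω ∂μ) / (μ sᶜ).toReal := by
  have hYmeas' : Measurable[mΩ] Y := hYmeas
  have hs' : MeasurableSet[mΩ] s := hs
  have hsne : s.Nonempty := by
    by_contra h
    rw [Set.not_nonempty_iff_eq_empty] at h
    rw [h] at hpa
    simp at hpa
  have hC : 0 ≤ C := le_trans (abs_nonneg _) (hYbdd hsne.choose)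
  set f1 : Ω → ℝ := s.indicator (fun _ => (1:ℝ)) with hf1def
  have hf1meas : Measurable[mΩ] f1 := measurable_const.indicator hs'
  have hf1bdd : ∀ ω, |f1 ω| ≤ 1 := by
    intro ω
    by_cases h : ω ∈ s <;> simp [hf1def, Set.indicator_apply, h]
  -- integrability of Y
  have hYint : Integrable Y μ := by
    refine (integrable_const C).mono' (hYmeas'.aestronglyMeasurable : AEStronglyMeasurable[mΩ] Y μ) (ae_of_all _ fun ω => ?_)
    simpa using hYbdd ω
  have hf1Yint : Integrable (fun ω => f1 ω * Y ω) μ :=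
    hYint.bdd_mul (hf1meas.aestronglyMeasurable : AEStronglyMeasurable[mΩ] f1 μ) (ae_of_all _ fun ω => by
      simpa using hf1bdd ω)
  -- p := μ[f1|m], bounded by 1 a.e.
  set p : Ω → ℝ := μ[f1|m] with hpdef
  have hpbdd : ∀ᵐ ω ∂μ, ‖p ω‖ ≤ 1 := by
    have h0 : 0 ≤ᵐ[μ] p := condExp_nonneg (ae_of_all _ fun ω =>
      Set.indicator_nonneg (fun _ _ => zero_le_one) ω)
    have h1 : p ≤ᵐ[μ] μ[(fun _ => (1:ℝ))|m] := condExp_mono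
      (hf1Yint.congr (ae_of_all _ fun ω => rfl) |> fun _ => (integrable_const 1).mono'
        (hf1meas.aestronglyMeasurable : AEStronglyMeasurable[mΩ] f1 μ) (ae_of_all _ fun ω => by simpa using hf1bdd ω))
      (integrable_const 1)
      (ae_of_all _ fun ω => by
        by_cases h : ω ∈ s <;> simp [hf1def, Set.indicator_apply, h])
    have hc : μ[(fun _ => (1:ℝ))|m] = fun _ => (1:ℝ) := condExp_const hm 1
    filter_upwards [h0, h1] with ω h0ω h1ω
    rw [hc] at h1ω
    have h0' : (0:ℝ) ≤ p ω := h0ω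
    have h1' : p ω ≤ 1 := h1ω
    rw [Real.norm_eq_abs, abs_le]
    exact ⟨by linarith, h1'⟩
  have hpYint : Integrable (fun ω => p ω * Y ω) μ :=
    hYint.bdd_mul (stronglyMeasurable_condExp.mono hm).aestronglyMeasurable hpbdd
  have hpEYint : Integrable (fun ω => p ω * (μ[Y|m]) ω) μ :=
    integrable_condExp.bdd_mul (stronglyMeasurable_condExp.mono hm).aestronglyMeasurable hpbdd
  -- ∫ μ[f1*Y|m] = ∫ f1*Y = ∫_s Y
  have hA : ∫ ω, (μ[fun ω' => f1 ω' * Y ω'|m]) ω ∂μ = ∫ ω in s, Y ω ∂μ := by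
    rw [integral_condExp hm]
    have hind : ∫ x, s.indicator Y x ∂μ = ∫ x in s, Y x ∂μ := @integral_indicator Ω ℝ mΩ _ _ Y s μ hs'
    rw [← hind]
    refine integral_congr_ae (ae_of_all _ fun ω => ?_)
    by_cases h : ω ∈ s <;> simp [hf1def, Set.indicator_apply, h]
  -- pull-out property: μ[p*Y|m] =ᵐ p * μ[Y|m]
  have hpull : (μ[fun ω => p ω * Y ω|m]) =ᵐ[μ] fun ω => p ω * (μ[Y|m]) ω :=
    condExp_stronglyMeasurable_mul_of_bound hm stronglyMeasurable_condExp hYint 1 hpbdd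
  have hB : ∫ ω, p ω * (μ[Y|m]) ω ∂μ = ∫ ω, p ω * Y ω ∂μ := by
    rw [← integral_congr_ae hpull, integral_condExp hm]
  -- integral of cova
  have hcovaint : Integrable cova μ :=
    (integrable_condExp.sub hpEYint).congr hcova.symm
  have hIeq : ∫ ω, cova ω ∂μ = (∫ ω in s, Y ω ∂μ) - ∫ ω, p ω * Y ω ∂μ := by
    rw [integral_congr_ae hcova, integral_sub integrable_condExp hpEYint, hA, hB]
  -- ∫ cova < 0
  have hIneg : ∫ ω, cova ω ∂μ < 0 := by
    rcases lt_or_eq_of_le (integral_nonpos_of_ae hnonpos) with h | h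
    · exact h
    exfalso
    have hnn : 0 ≤ᵐ[μ] -cova := hnonpos.mono fun ω hω => by simpa using hω
    have hint0 : ∫ ω, (-cova) ω ∂μ = 0 := by
      simp only [Pi.neg_apply]
      rw [integral_neg, h]
      ring
    have hz : -cova =ᵐ[μ] 0 := (integral_eq_zero_iff_of_nonneg_ae hnn hcovaint.neg).mp hint0
    have hnull : μ {ω | cova ω < 0} = 0 := by
      refine measure_mono_null (fun ω hω => ?_) (ae_iff.mp hz)
      simp only [Set.mem_setOf_eq, Pi.neg_apply, Pi.zero_apply] at *
      intro hc
      linarith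
    exact absurd hnull (ne_of_gt hneg)
  -- ∫ μ[1_{sᶜ}|m] * Y = ∫ (1 - p) * Y = ∫_{sᶜ} Y + ∫ cova stuff
  have hcompl : (μ[sᶜ.indicator (fun _ => (1:ℝ))|m]) =ᵐ[μ] fun ω => 1 - p ω := by
    have heq : sᶜ.indicator (fun _ => (1:ℝ)) = fun ω => (fun _ => (1:ℝ)) ω - f1 ω := by
      funext ω
      by_cases h : ω ∈ s <;> simp [hf1def, Set.indicator_apply, h]
    rw [heq]
    have hf1int : Integrable f1 μ := (integrable_const 1).mono'
      (hf1meas.aestronglyMeasurable : AEStronglyMeasurable[mΩ] f1 μ) (ae_of_all _ fun ω => by simpa using hf1bdd ω)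
    calc μ[fun ω => (fun _ => (1:ℝ)) ω - f1 ω|m]
        =ᵐ[μ] μ[fun _ => (1:ℝ)|m] - μ[f1|m] := condExp_sub (integrable_const 1) hf1int m
      _ =ᵐ[μ] fun ω => 1 - p ω := by
          rw [condExp_const hm 1]
          exact ae_of_all _ fun ω => rfl
  have hBcompl : ∫ ω, (μ[sᶜ.indicator (fun _ => (1:ℝ))|m]) ω * Y ω ∂μ
      = ∫ ω, Y ω ∂μ - ∫ ω, p ω * Y ω ∂μ := by
    have hmul : (fun ω => (μ[sᶜ.indicator (fun _ => (1:ℝ))|m]) ω * Y ω)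
        =ᵐ[μ] fun ω => (1 - p ω) * Y ω := by
      filter_upwards [hcompl] with ω hω
      rw [hω]
    rw [integral_congr_ae hmul]
    have : ∀ ω, (1 - p ω) * Y ω = Y ω - p ω * Y ω := fun ω => by ring
    simp_rw [this]
    rw [integral_sub hYint hpYint]
  have htotal : ∫ ω, Y ω ∂μ = (∫ ω in s, Y ω ∂μ) + ∫ ω in sᶜ, Y ω ∂μ :=
    (@integral_add_compl Ω ℝ mΩ _ _ Y s μ hs' hYint).symm
  -- put it together
  set Ia := ∫ ω in s, Y ω ∂μ
  set Ib := ∫ ω in sᶜ, Y ω ∂μ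
  set I := ∫ ω, cova ω ∂μ
  have h1 : ∫ ω, p ω * Y ω ∂μ = Ia - I := by rw [hIeq]; ring
  have h2 : ∫ ω, (μ[sᶜ.indicator (fun _ => (1:ℝ))|m]) ω * Y ω ∂μ = Ib + I := by
    rw [hBcompl, htotal, h1]; ring
  rw [hpdef] at h1
  rw [h1, h2]
  have ha : I / (μ s).toReal < 0 := div_neg_of_neg_of_pos hIneg hpa
  have hb : I / (μ sᶜ).toReal < 0 := div_neg_of_neg_of_pos hIneg hpb
  rw [sub_div, add_div]
  linarith
end
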